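/- arXiv:1402.0052 — 3 statements merged into one kernel-verified Lean document; each statement's English description precedes it below -/
import Mathlib

section
/- Let σ¹, σ² : Fin n → Bool be two fixed assignments that disagree on exactly n₀ of the n variables, and let C be a uniformly random NAE clause of K literals with variables chosen uniformly with replacement and independent uniform polarities. Then the probability that C is simultaneously NAE-unsatisfied by both σ¹ and σ² equals 2^{-K+1}·((n₀/n)^K + (1 - n₀/n)^K). -/
/-!
Reparametrise a clause by its variables and its literal values under `σ1`: the polarities are
recovered from these by `xor`, so this is a bijection. Under `σ2` a literal takes its `σ1`-value
xor-ed with whether `σ1` and `σ2` disagree on its variable. Hence a clause fails for both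
assignments iff its `σ1`-values are constant (2 choices) and its variables lie all inside or all
outside the disagreement set (`n₀ ^ K + (n - n₀) ^ K` choices), out of `n ^ K * 2 ^ K` clauses.
-/

/-- A clause with variables chosen with replacement: `C.1 i` is the variable of literal `i`,
`C.2 i` its polarity. -/
abbrev Clause (n K : ℕ) := (Fin K → Fin n) × (Fin K → Bool)

/-- Value of the `i`-th literal of clause `C` under assignment `σ`. -/
def litVal {n K : ℕ} (σ : Fin n → Bool) (C : Clause n K) (i : Fin K) : Bool :=
  xor (σ (C.1 i)) (C.2 i)

section CompConst

variable {ι α β : Type*}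

noncomputable def compConstEquivSigma [Nonempty ι] (p : α → β) :
    {x : ι → α // ∀ i j, p (x i) = p (x j)} ≃ Σ b : β, {x : ι → α // ∀ i, p (x i) = b} where
  toFun x := ⟨p (x.1 (Classical.arbitrary ι)), x.1, fun i => x.2 i _⟩
  invFun y := ⟨y.2.1, fun i j => (y.2.2 i).trans (y.2.2 j).symm⟩
  left_inv _ := rfl
  right_inv y := Sigma.subtype_ext (y.2.2 _) rfl

theorem card_compConst [Fintype ι] [Nonempty ι] [Finite α] [Fintype β] (p : α → β) :
    Nat.card {x : ι → α // ∀ i j, p (x i) = p (x j)} =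
      ∑ b, Nat.card {a // p a = b} ^ Fintype.card ι := by
  rw [Nat.card_congr (compConstEquivSigma p), Nat.card_sigma]
  refine Finset.sum_congr rfl fun b _ => ?_
  rw [Nat.card_congr (Equiv.subtypePiEquivPi (β := fun _ : ι => α) (p := fun _ a => p a = b)),
    Nat.card_fun, Nat.card_eq_fintype_card (α := ι)]

theorem card_const [Fintype ι] [Nonempty ι] [Fintype α] :
    Nat.card {x : ι → α // ∀ i j, x i = x j} = Fintype.card α := by
  simpa using card_compConst (ι := ι) (id : α → α)

end CompConst

theorem Bool.forall_xor_eq_iff {ι : Type*} (u d : ι → Bool) (hu : ∀ i j, u i = u j) :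
    (∀ i j, xor (u i) (d i) = xor (u j) (d j)) ↔ ∀ i j, d i = d j := by
  refine forall₂_congr fun i j => ?_
  rw [hu i j]
  cases u j <;> simp

theorem litVal_eq_xor {n K : ℕ} (σ1 σ2 : Fin n → Bool) (C : Clause n K) (i : Fin K) :
    litVal σ2 C i = xor (litVal σ1 C i) (xor (σ1 (C.1 i)) (σ2 (C.1 i))) := by
  unfold litVal
  cases σ1 (C.1 i) <;> cases σ2 (C.1 i) <;> cases C.2 i <;> rfl

theorem bothUnsat_iff {n K : ℕ} (σ1 σ2 : Fin n → Bool) (C : Clause n K) :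
    ((∀ i j, litVal σ1 C i = litVal σ1 C j) ∧ (∀ i j, litVal σ2 C i = litVal σ2 C j)) ↔
      (∀ i j, xor (σ1 (C.1 i)) (σ2 (C.1 i)) = xor (σ1 (C.1 j)) (σ2 (C.1 j))) ∧
        ∀ i j, litVal σ1 C i = litVal σ1 C j := by
  simp only [litVal_eq_xor σ1 σ2 C]
  constructor
  · rintro ⟨h1, h2⟩
    exact ⟨(Bool.forall_xor_eq_iff _ _ h1).1 h2, h1⟩
  · rintro ⟨h2, h1⟩
    exact ⟨h1, (Bool.forall_xor_eq_iff _ _ h1).2 h2⟩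

def Clause.litValEquiv {n K : ℕ} (σ : Fin n → Bool) :
    Clause n K ≃ (Fin K → Fin n) × (Fin K → Bool) where
  toFun C := (C.1, litVal σ C)
  invFun C := (C.1, litVal σ C)
  left_inv C := by ext <;> simp [litVal]
  right_inv C := by ext <;> simp [litVal]

theorem card_bothUnsat {n K : ℕ} (hK : 1 ≤ K) (σ1 σ2 : Fin n → Bool) :
    Nat.card {C : Clause n K //
        (∀ i j : Fin K, litVal σ1 C i = litVal σ1 C j) ∧
        (∀ i j : Fin K, litVal σ2 C i = litVal σ2 C j)} =
      (∑ b, Nat.card {a // xor (σ1 a) (σ2 a) = b} ^ K) * 2 := by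
  have : Nonempty (Fin K) := ⟨⟨0, hK⟩⟩
  let e := (Equiv.subtypeEquiv (Clause.litValEquiv σ1) (bothUnsat_iff σ1 σ2)).trans
    (Equiv.subtypeProdEquivProd
      (p := fun x : Fin K → Fin n => ∀ i j, xor (σ1 (x i)) (σ2 (x i)) = xor (σ1 (x j)) (σ2 (x j)))
      (q := fun v : Fin K → Bool => ∀ i j, v i = v j))
  rw [Nat.card_congr e, Nat.card_prod,
    card_compConst (fun a => xor (σ1 a) (σ2 a)), card_const]
  simp

theorem card_clause (n K : ℕ) : Nat.card (Clause n K) = n ^ K * 2 ^ K := by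
  simp

theorem card_fiber_true_add_card_fiber_false {α : Type*} [Finite α] (f : α → Bool) :
    Nat.card {a // f a = true} + Nat.card {a // f a = false} = Nat.card α := by
  rw [← Fintype.sum_bool (fun b => Nat.card {a // f a = b}), ← Nat.card_sigma,
    Nat.card_congr (Equiv.sigmaFiberEquiv f)]

theorem sum_pow_mul_two_div_eq {n a b : ℝ} (hn : n ≠ 0) (hab : a + b = n) (K : ℕ) :
    (a ^ K + b ^ K) * 2 / (n ^ K * 2 ^ K) =
      2 ^ (-(K : ℝ) + 1) * ((a / n) ^ K + (1 - a / n) ^ K) := by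
  rw [Real.rpow_add two_pos, Real.rpow_neg two_pos.le, Real.rpow_one, Real.rpow_natCast,
    show 1 - a / n = b / n by field_simp; linarith, div_pow, div_pow]
  field_simp

/-- For two fixed assignments disagreeing on exactly `n₀` variables, and a uniformly random
clause (variables i.i.d. uniform, polarities i.i.d. uniform), the probability that the clause
is NAE-unsatisfied by both assignments (all literal values equal under each) equals
`2^{-K+1} ((n₀/n)^K + (1 - n₀/n)^K)`. -/
theorem stmt3 {n K : ℕ} (hn : 0 < n) (hK : 1 ≤ K) (σ1 σ2 : Fin n → Bool) (n₀ : ℕ)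
    (hdis : Nat.card {i : Fin n // σ1 i ≠ σ2 i} = n₀) :
    (Nat.card {C : Clause n K //
        (∀ i j : Fin K, litVal σ1 C i = litVal σ1 C j) ∧
        (∀ i j : Fin K, litVal σ2 C i = litVal σ2 C j)} : ℝ)
      / (Nat.card (Clause n K) : ℝ)
      = 2 ^ (-(K : ℝ) + 1) * (((n₀ : ℝ) / n) ^ K + (1 - (n₀ : ℝ) / n) ^ K) := by
  have htrue : Nat.card {a // xor (σ1 a) (σ2 a) = true} = n₀ := by
    rw [← hdis]
    exact Nat.card_congr (Equiv.subtypeEquivRight fun a => by simp)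
  have hsplit := card_fiber_true_add_card_fiber_false fun a => xor (σ1 a) (σ2 a)
  rw [htrue, Nat.card_fin] at hsplit
  rw [card_bothUnsat hK, card_clause, Fintype.sum_bool, htrue]
  push_cast
  exact sum_pow_mul_two_div_eq (by positivity) (by exact_mod_cast hsplit) K
end

section
/- Fix 0 < ε < 1, set β = ln K / K, η = (ln K / K)², and m = ⌈ε²K / ln K⌉. Then for all sufficiently large K, the number of m-tuples (σ¹,…,σᵐ) of assignments in {0,1}ⁿ such that (β−η)n ≤ ρ(σʲ,σᵏ) ≤ βn for all distinct j,k is at most exp(n·ε²·ln K + n·C·ln ln K + o(n)) for some universal constant C, where ρ denotes Hamming distance. -/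
/-!
Fixing the first assignment σ¹, every other σʲ lies in the Hamming ball of radius `t = ⌊βn⌋`
around it, so there are at most `2ⁿ · |B(t)|^(m-1)` tuples. Weighting each point `y` by
`β ^ ρ(x, y)` gives the Chernoff-type bound `|B(t)| · βᵗ ≤ ∑_y β ^ ρ(x, y) = (1 + β)ⁿ`, whence
`|B(t)| ≤ exp(βn(1 - ln β))`. Since `(m - 1)β ≤ ε²` and `-ln β = ln K - ln ln K`, the exponent is
at most `n(ln 2 + ε²(1 + ln K - ln ln K)) ≤ n(ε² ln K + ln ln K)` as soon as `ln ln K ≥ 1`.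
-/

open Real Filter Finset

section Hamming

variable {ι β : Type*} [Fintype ι] [DecidableEq ι] [Fintype β] [DecidableEq β]

theorem sum_pow_hammingDist {R : Type*} [CommRing R] (x : ι → β) (b : R) :
    ∑ y : ι → β, b ^ hammingDist x y = (1 + (Fintype.card β - 1) * b) ^ Fintype.card ι := by
  have hcoord : ∀ i, ∑ c : β, (if x i ≠ c then b else 1) = 1 + (Fintype.card β - 1) * b := by
    intro i
    have hβ : 1 ≤ Fintype.card β := Fintype.card_pos_iff.2 ⟨x i⟩
    rw [Fintype.sum_eq_add_sum_compl (x i), if_neg (not_not.2 rfl),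
      sum_congr rfl fun c hc => if_pos (Ne.symm (mem_compl.1 hc ∘ mem_singleton.2)), sum_const,
      card_compl, card_singleton, nsmul_eq_mul, Nat.cast_sub hβ, Nat.cast_one]
  calc ∑ y : ι → β, b ^ hammingDist x y
      = ∑ y : ι → β, ∏ i, (if x i ≠ y i then b else 1) := by
        refine sum_congr rfl fun y _ => ?_
        rw [hammingDist, ← prod_filter, prod_const]
    _ = ∏ i, ∑ c : β, (if x i ≠ c then b else 1) := by rw [Fintype.prod_sum]
    _ = _ := by rw [Fintype.prod_congr _ _ hcoord, prod_const, card_univ]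

theorem card_hammingBall_mul_pow_le (x : ι → β) (t : ℕ) {b : ℝ} (hb0 : 0 ≤ b) (hb1 : b ≤ 1) :
    (#{y | hammingDist x y ≤ t} : ℝ) * b ^ t ≤ (1 + (Fintype.card β - 1) * b) ^ Fintype.card ι := by
  rw [← sum_pow_hammingDist x b, ← nsmul_eq_mul, ← sum_const]
  calc ∑ y ∈ univ.filter fun y => hammingDist x y ≤ t, b ^ t
      ≤ ∑ y ∈ univ.filter fun y => hammingDist x y ≤ t, b ^ hammingDist x y :=
        sum_le_sum fun y hy => pow_le_pow_of_le_one hb0 hb1 (mem_filter.1 hy).2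
    _ ≤ ∑ y, b ^ hammingDist x y :=
        sum_le_sum_of_subset_of_nonneg (filter_subset _ _) fun _ _ _ => pow_nonneg hb0 _

end Hamming

theorem card_hammingBall_le_exp {ι : Type*} [Fintype ι] [DecidableEq ι] (x : ι → Bool) {t : ℕ}
    {b : ℝ} (hb0 : 0 < b) (hb1 : b ≤ 1) (ht : (t : ℝ) ≤ b * Fintype.card ι) :
    (#{y | hammingDist x y ≤ t} : ℝ) ≤ exp (b * Fintype.card ι * (1 - log b)) := by
  have hball := card_hammingBall_mul_pow_le x t hb0.le hb1
  set n := Fintype.card ι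
  norm_num only [Fintype.card_bool, Nat.cast_ofNat, one_mul] at hball
  have hgrowth : (1 + b) ^ n ≤ exp (b * n) := by
    rw [mul_comm, exp_nat_mul]
    exact pow_le_pow_left₀ (by positivity) (by linarith [add_one_le_exp b]) n
  have hradius : b⁻¹ ^ t ≤ exp (b * n * -log b) := by
    rw [← exp_log (inv_pos.2 hb0), ← exp_nat_mul, log_inv]
    exact exp_le_exp.2 (mul_le_mul_of_nonneg_right ht (neg_nonneg.2 (log_nonpos hb0.le hb1)))
  calc (#{y | hammingDist x y ≤ t} : ℝ) = #{y | hammingDist x y ≤ t} * b ^ t * b⁻¹ ^ t := by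
        rw [mul_assoc, ← mul_pow, mul_inv_cancel₀ hb0.ne', one_pow, mul_one]
    _ ≤ (1 + b) ^ n * b⁻¹ ^ t := mul_le_mul_of_nonneg_right hball (by positivity)
    _ ≤ exp (b * n) * exp (b * n * -log b) :=
        mul_le_mul hgrowth hradius (by positivity) (by positivity)
    _ = exp (b * n * (1 - log b)) := by rw [← exp_add]; ring_nf

theorem card_tuples_le_card_mul_pow {ι α : Type*} [Fintype ι] [Fintype α] (P : (ι → α) → Prop)
    (ball : α → Finset α) {N : ℕ} (hN : ∀ x, #(ball x) ≤ N)
    (i₀ : ι) (hP : ∀ τ, P τ → ∀ i ≠ i₀, τ i ∈ ball (τ i₀)) :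
    Nat.card {τ // P τ} ≤ Fintype.card α * N ^ (Fintype.card ι - 1) := by
  classical
  let tuplesFrom (x : α) : Finset (ι → α) :=
    Fintype.piFinset fun i => if i = i₀ then {x} else ball x
  have hcover : univ.filter P ⊆ univ.biUnion tuplesFrom := fun τ hτ =>
    mem_biUnion.2 ⟨τ i₀, mem_univ _, Fintype.mem_piFinset.2 fun i => by
      by_cases hi : i = i₀
      · simp [hi]
      · simpa [hi] using hP τ (mem_filter.1 hτ).2 i hi⟩
  have hcard : ∀ x, #(tuplesFrom x) ≤ N ^ (Fintype.card ι - 1) := fun x => by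
    rw [Fintype.card_piFinset, Fintype.prod_eq_mul_prod_compl i₀, if_pos rfl, card_singleton,
      one_mul, ← card_singleton i₀, ← card_compl]
    exact prod_le_pow_card _ _ _ fun i hi => by
      rw [if_neg (mem_compl.1 hi ∘ mem_singleton.2)]; exact hN x
  calc Nat.card {τ // P τ} = #(univ.filter P) := by
        rw [Nat.card_eq_fintype_card, Fintype.card_subtype]
    _ ≤ ∑ x, #(tuplesFrom x) := (card_le_card hcover).trans card_biUnion_le
    _ ≤ ∑ _x : α, N ^ (Fintype.card ι - 1) := sum_le_sum fun x _ => hcard x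
    _ = Fintype.card α * N ^ (Fintype.card ι - 1) := by rw [sum_const, card_univ, smul_eq_mul]

theorem card_tuples_le_exp {m n : ℕ} (hm : 0 < m) (P : (Fin m → Fin n → Bool) → Prop) {b : ℝ}
    (hb0 : 0 < b) (hb1 : b ≤ 1)
    (hP : ∀ τ, P τ → ∀ j k, j ≠ k → (hammingDist (τ j) (τ k) : ℝ) ≤ b * n) :
    (Nat.card {τ // P τ} : ℝ) ≤ exp (n * log 2 + (m - 1 : ℕ) * (b * n * (1 - log b))) := by
  set E := exp (b * n * (1 - log b))
  have hball : ∀ x : Fin n → Bool, #{y | hammingDist x y ≤ ⌊b * n⌋₊} ≤ ⌊E⌋₊ := fun x =>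
    Nat.le_floor (by
      simpa using card_hammingBall_le_exp x hb0 hb1 (Nat.floor_le (by positivity)))
  have hcount := card_tuples_le_card_mul_pow P _ hball ⟨0, hm⟩ fun τ hτ i hi =>
    mem_filter.2 ⟨mem_univ _, Nat.le_floor (hP τ hτ _ _ (Ne.symm hi))⟩
  simp only [Fintype.card_fun, Fintype.card_bool, Fintype.card_fin] at hcount
  calc (Nat.card {τ // P τ} : ℝ) ≤ 2 ^ n * (⌊E⌋₊ : ℝ) ^ (m - 1) := by exact_mod_cast hcount
    _ ≤ 2 ^ n * E ^ (m - 1) := by gcongr; exact Nat.floor_le (exp_pos _).le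
    _ = exp (n * log 2 + (m - 1 : ℕ) * (b * n * (1 - log b))) := by
        rw [exp_add, exp_nat_mul, exp_nat_mul, exp_log two_pos]

/-- Counting bound on m-tuples of assignments with all pairwise Hamming distances in
`[(β-η)n, βn]`, where `β = ln K / K`, `η = (ln K / K)²`, `m = ⌈ε²K / ln K⌉`: the number of
such tuples is at most `exp(nε² ln K + nC ln ln K + o(n))` for a universal constant `C`. -/
theorem stmt4 :
    ∃ C : ℝ, ∀ ε : ℝ, 0 < ε → ε < 1 →
      ∃ K₀ : ℕ, ∀ K : ℕ, K₀ ≤ K →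
        ∃ f : ℕ → ℝ, f =o[atTop] (fun n : ℕ => (n : ℝ)) ∧
          ∀ n : ℕ,
            (Nat.card {τ : Fin ⌈ε ^ 2 * K / Real.log K⌉₊ → (Fin n → Bool) //
                ∀ j k, j ≠ k →
                  (Real.log K / K - (Real.log K / K) ^ 2) * n ≤ hammingDist (τ j) (τ k) ∧
                  (hammingDist (τ j) (τ k) : ℝ) ≤ (Real.log K / K) * n} : ℝ)
              ≤ Real.exp ((n : ℝ) * ε ^ 2 * Real.log K
                  + (n : ℝ) * C * Real.log (Real.log K) + f n) := by
  refine ⟨1, fun ε hε _ => ⟨⌈exp (exp 1)⌉₊, fun K hK => ⟨fun _ => 0,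
    Asymptotics.isLittleO_zero _ _, fun n => ?_⟩⟩⟩
  have hK : exp (exp 1) ≤ K := (Nat.le_ceil _).trans (by exact_mod_cast hK)
  have hK0 : (0 : ℝ) < K := (exp_pos _).trans_le hK
  set L := log K
  have hL : exp 1 ≤ L := (le_log_iff_exp_le hK0).2 hK
  have hL0 : 0 < L := (exp_pos 1).trans_le hL
  have hlogL : 1 ≤ log L := (le_log_iff_exp_le hL0).2 hL
  have hlog2 : log 2 ≤ log L := log_le_log two_pos (by linarith [add_one_le_exp 1])
  have hb0 : 0 < L / K := div_pos hL0 hK0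
  have hb1 : L / K ≤ 1 := (div_le_one hK0).2 ((log_le_sub_one_of_pos hK0).trans (by linarith))
  have hm : 0 < ⌈ε ^ 2 * K / L⌉₊ := Nat.ceil_pos.2 (by positivity)
  have hmb : ((⌈ε ^ 2 * K / L⌉₊ - 1 : ℕ) : ℝ) * (L / K) ≤ ε ^ 2 := by
    calc ((⌈ε ^ 2 * K / L⌉₊ - 1 : ℕ) : ℝ) * (L / K) ≤ ε ^ 2 * K / L * (L / K) :=
          mul_le_mul_of_nonneg_right (Nat.lt_ceil.1 (Nat.sub_lt hm one_pos)).le hb0.le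
      _ = ε ^ 2 := by field_simp
  refine (card_tuples_le_exp hm _ hb0 hb1 fun τ hτ j k hjk => (hτ j k hjk).2).trans
    (exp_le_exp.2 ?_)
  rw [log_div hL0.ne' hK0.ne']
  have hgap : 0 ≤ 1 - (log L - L) := by linarith [log_le_sub_one_of_pos hL0]
  have hpairs := mul_le_mul_of_nonneg_right hmb (mul_nonneg (Nat.cast_nonneg n) hgap)
  linarith [mul_nonneg (Nat.cast_nonneg n) (mul_nonneg (sq_nonneg ε) (sub_nonneg.2 hlogL)),
    mul_le_mul_of_nonneg_left hlog2 (Nat.cast_nonneg n)]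
end

section
/- Let W_ℓ denote the size of generation ℓ of a Galton–Watson branching process with Poisson(β) offspring distribution, β > 1. Let θ = 1 + (eβ)^{-t} and γ_ℓ = (eβ)^{-ℓ}. Then for all 1 ≤ ℓ ≤ t, E[θ^{W_ℓ}] ≤ 1 + γ_{t−ℓ}. -/
open MeasureTheory Real

/-! With `c = (eβ)⁻¹` and `G x = exp (βx - β)`, one step of the iteration sends `1 + c^(s+1)`
below `1 + c^s`: indeed `G (1 + c^(s+1)) = exp z` with `z = β c^(s+1) = c^s / e ≤ 1`, and
`exp z ≤ 1 + e z` on `[0, 1]` by convexity. Monotonicity of `G` lets these steps be chained. -/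

lemma Real.exp_le_one_add_exp_one_mul {z : ℝ} (h0 : 0 ≤ z) (h1 : z ≤ 1) :
    exp z ≤ 1 + exp 1 * z := by
  have h := convexOn_exp.2 (Set.mem_univ 0) (Set.mem_univ 1) (sub_nonneg.2 h1) h0
    (sub_add_cancel 1 z)
  simp only [smul_eq_mul, mul_zero, mul_one, zero_add, exp_zero] at h
  linarith

lemma Monotone.iterate_map_le_of_map_succ_le {α : Type*} [Preorder α] {f : α → α}
    (hf : Monotone f) {a : ℕ → α} (ha : ∀ s, f (a (s + 1)) ≤ a s) (ℓ s : ℕ) :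
    f^[ℓ] (a (s + ℓ)) ≤ a s := by
  induction ℓ generalizing s with
  | zero => rfl
  | succ n ih =>
    rw [Function.iterate_succ_apply', ← add_assoc, add_right_comm]
    exact (hf (ih (s + 1))).trans (ha s)

lemma exp_mul_one_add_inv_pow_succ_sub_le {β : ℝ} (hβ : (exp 1)⁻¹ ≤ β) (s : ℕ) :
    exp (β * (1 + (exp 1 * β)⁻¹ ^ (s + 1)) - β) ≤ 1 + (exp 1 * β)⁻¹ ^ s := by
  set c := (exp 1 * β)⁻¹ with hc
  have hβ0 : 0 < β := (inv_pos.2 (exp_pos 1)).trans_le hβ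
  have hc0 : 0 ≤ c := by positivity
  have hc1 : c ≤ 1 := inv_le_one_of_one_le₀ ((inv_le_iff_one_le_mul₀' (exp_pos 1)).1 hβ)
  have hz : β * c ^ (s + 1) = (exp 1)⁻¹ * c ^ s := by
    rw [pow_succ', ← mul_assoc, hc, mul_inv_rev, ← mul_assoc, mul_inv_cancel₀ hβ0.ne', one_mul]
  have hz1 : (exp 1)⁻¹ * c ^ s ≤ 1 :=
    mul_le_one₀ (inv_le_one_of_one_le₀ (one_le_exp zero_le_one)) (pow_nonneg hc0 s)
      (pow_le_one₀ hc0 hc1)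
  calc exp (β * (1 + c ^ (s + 1)) - β) = exp ((exp 1)⁻¹ * c ^ s) := by rw [← hz]; ring_nf
    _ ≤ 1 + exp 1 * ((exp 1)⁻¹ * c ^ s) :=
      exp_le_one_add_exp_one_mul (by positivity) hz1
    _ = 1 + c ^ s := by rw [mul_inv_cancel_left₀ (exp_pos 1).ne']

theorem stmt9_general {Ω : Type*} [MeasurableSpace Ω] (μ : Measure Ω) [IsProbabilityMeasure μ]
    (β : ℝ) (hβ : 1 < β) (W : ℕ → Ω → ℕ)
    (hpgf : ∀ (ℓ : ℕ) (θ : ℝ), 1 ≤ θ →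
      ∫ ω, θ ^ (W ℓ ω) ∂μ = (fun x : ℝ => Real.exp (β * x - β))^[ℓ] θ)
    (t ℓ : ℕ) (hℓt : ℓ ≤ t) :
    ∫ ω, (1 + ((Real.exp 1 * β)⁻¹) ^ t) ^ (W ℓ ω) ∂μ
      ≤ 1 + ((Real.exp 1 * β)⁻¹) ^ (t - ℓ) := by
  have hβe : (exp 1)⁻¹ ≤ β := (inv_le_one_of_one_le₀ (one_le_exp zero_le_one)).trans hβ.le
  have hG : Monotone fun x : ℝ => exp (β * x - β) := fun x y hxy =>
    exp_le_exp.2 (by gcongr)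
  rw [hpgf ℓ _ (le_add_of_nonneg_right (by positivity))]
  obtain ⟨s, rfl⟩ := Nat.exists_eq_add_of_le' hℓt
  rw [Nat.add_sub_cancel]
  exact hG.iterate_map_le_of_map_succ_le (a := fun s => 1 + (exp 1 * β)⁻¹ ^ s)
    (exp_mul_one_add_inv_pow_succ_sub_le hβe) ℓ s

/-- For a Poisson(β) Galton–Watson process (`W ℓ` = size of generation ℓ, whose probability
generating function is the ℓ-fold iterate of `G(θ) = exp(βθ - β)`), with `θ = 1 + (eβ)^{-t}`
and `γ_ℓ = (eβ)^{-ℓ}`, one has `E[θ^{W_ℓ}] ≤ 1 + γ_{t-ℓ}` for all `1 ≤ ℓ ≤ t`. -/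
theorem stmt9 {Ω : Type*} [MeasurableSpace Ω] (μ : Measure Ω) [IsProbabilityMeasure μ]
    (β : ℝ) (hβ : 1 < β) (W : ℕ → Ω → ℕ)
    (hpgf : ∀ (ℓ : ℕ) (θ : ℝ), 1 ≤ θ →
      ∫ ω, θ ^ (W ℓ ω) ∂μ = (fun x : ℝ => Real.exp (β * x - β))^[ℓ] θ)
    (t ℓ : ℕ) (h1 : 1 ≤ ℓ) (hℓt : ℓ ≤ t) :
    ∫ ω, (1 + ((Real.exp 1 * β)⁻¹) ^ t) ^ (W ℓ ω) ∂μ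
      ≤ 1 + ((Real.exp 1 * β)⁻¹) ^ (t - ℓ) :=
  stmt9_general μ β hβ W hpgf t ℓ hℓt
end
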